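/- Let Q be a finite acyclic quiver and R a quasi-Frobenius ring. If a representation K ∈ Rep(Q,R) has finite projective dimension, i.e. admits a finite resolution 0 → P_n → ⋯ → P_1 → P_0 → K → 0 by projective objects of Rep(Q,R), then K has projective dimension at most 1: there exists a short exact sequence 0 → S → T → K → 0 in Rep(Q,R) with S and T projective objects of Rep(Q,R). -/

import Mathlib

open CategoryTheory CategoryTheory.Limits

/-- An `R`-linear map factors through a projective `R`-module. -/
def FactorsThroughProjective (R : Type) [Ring R] {M N : Type} [AddCommGroup M] [Module R M]
    [AddCommGroup N] [Module R N] (f : M →ₗ[R] N) : Prop :=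
  ∃ (P : Type) (_ : AddCommGroup P) (_ : Module R P) (_ : Module.Projective R P)
    (a : M →ₗ[R] P) (b : P →ₗ[R] N), b ∘ₗ a = f

/-- An `R`-linear map is a stable equivalence if it becomes an isomorphism in the stable
module category: there is `g` in the other direction such that `g ∘ f - id` and `f ∘ g - id`
each factor through a projective module. -/
def IsStableEquiv (R : Type) [Ring R] {M N : Type} [AddCommGroup M] [Module R M]
    [AddCommGroup N] [Module R N] (f : M →ₗ[R] N) : Prop :=
  ∃ g : N →ₗ[R] M,
    FactorsThroughProjective R (g ∘ₗ f - LinearMap.id) ∧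
    FactorsThroughProjective R (f ∘ₗ g - LinearMap.id)

/-- A quasi-Frobenius ring: left and right Noetherian, and injective over itself
as a left and as a right module. -/
class IsQuasiFrobenius (R : Type) [Ring R] : Prop where
  noetherian_left : IsNoetherianRing R
  noetherian_right : IsNoetherianRing Rᵐᵒᵖ
  selfInjective_left : Module.Injective R R
  selfInjective_right : Module.Injective Rᵐᵒᵖ Rᵐᵒᵖ

/-- The category of representations of a quiver `V` over a ring `R`:
functors from the free path category on `V` to `R`-modules. -/
abbrev QuivRep (R : Type) [Ring R] (V : Type) [Quiver.{1} V] : Type _ :=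
  Paths V ⥤ ModuleCat.{0} R

namespace QuivRep

variable {R : Type} [Ring R] {V : Type} [Quiver.{1} V]

/-- The `R`-module of a representation at a vertex `j`. -/
abbrev vtx (M : QuivRep R V) (j : V) : ModuleCat R := M.obj ((Paths.of V).obj j)

/-- The structure map of a representation along an arrow `a : i ⟶ j`. -/
abbrev arrowMap (M : QuivRep R V) {i j : V} (a : i ⟶ j) : M.vtx i ⟶ M.vtx j :=
  M.map ((Paths.of V).map a)

/-- The component at a vertex `j` of a morphism of representations. -/
abbrev app {M N : QuivRep R V} (f : M ⟶ N) (j : V) : ↥(M.vtx j) →ₗ[R] ↥(N.vtx j) := (f.app ((Paths.of V).obj j)).hom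

/-- A representation is monic if, at each vertex `j`, the natural map
`⊕_{a : i ⟶ j} M_i → M_j`, `(x_a) ↦ Σ_a m_a (x_a)`, is injective. -/
def IsMonic (M : QuivRep R V) : Prop :=
  ∀ j : V,
    letI : DecidableEq (Σ i : V, i ⟶ j) := Classical.decEq _
    Function.Injective
      (DirectSum.toModule R (Σ i : V, i ⟶ j) (M.vtx j)
        (fun a => ((M.arrowMap a.2).hom : ↥(M.vtx a.1) →ₗ[R] ↥(M.vtx j))))

/-- A representation is RI-fibrant if, at each vertex `j`, the natural map
`M_j → ∏_{a : j ⟶ i} M_i`, `x ↦ (m_a x)_a`, is surjective. -/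
def IsRIFibrant (M : QuivRep R V) : Prop :=
  ∀ j : V,
    Function.Surjective
      (LinearMap.pi
        (fun a : Σ i : V, (j ⟶ i) => ((M.arrowMap a.2).hom : ↥(M.vtx j) →ₗ[R] ↥(M.vtx a.1))))

end QuivRep

/-- A quiver is finite and acyclic: finitely many vertices and arrows, and the only
paths from a vertex to itself are trivial. -/
def IsFiniteAcyclic (V : Type) [Quiver.{1} V] : Prop :=
  Nonempty (Fintype V) ∧ (∀ i j : V, Nonempty (Fintype (i ⟶ j))) ∧
    ∀ (i : V) (p : Quiver.Path i i), p.length = 0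

/-- `ProjDimLE R V n K` : the representation `K` admits a projective resolution
`0 → P_n → ⋯ → P_1 → P_0 → K → 0` of length at most `n`. -/
def ProjDimLE (R : Type) [Ring R] (V : Type) [Quiver.{1} V] :
    ℕ → QuivRep R V → Prop
  | 0, K => Projective K
  | n + 1, K => ∃ (P : QuivRep R V), Projective P ∧
      ∃ f : P ⟶ K, Epi f ∧ ProjDimLE R V n (kernel f)
/-!
A projective representation `S` has injective dimension at most one. Indeed `S` is projective at
every vertex, hence injective there because `R` is quasi-Frobenius, and the standard coresolution
`0 → S → ∏ⱼ coindⱼ Sⱼ → ∏_{a : i ⟶ j} coindᵢ Sⱼ → 0` over the free category `Paths V` consists of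
coinduced, hence injective, representations. Consequently `Ext¹(B, S) = 0` whenever `B` embeds in a
projective `P`, so a short exact sequence `0 → S → T → B → 0` with `T` projective splits and `B` is
projective. Applied along a finite projective resolution of `K`, this shows by induction that the
kernel of `P₀ → K` is projective.
-/

universe u

section QuasiFrobenius

variable {R : Type u} [Ring R] [IsNoetherianRing R] [Module.Injective R R]

theorem Module.Baer.finsupp (ι : Type*) : Module.Baer R (ι →₀ R) := by
  classical
  intro I g
  obtain ⟨t, ht⟩ : (LinearMap.range g).FG := Module.Finite.iff_fg.mp inferInstance
  let S : Set ι := ↑(t.biUnion Finsupp.support)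
  have hg : LinearMap.range g ≤ Finsupp.supported R R S := by
    rw [← ht, Submodule.span_le]
    intro x hx
    exact Finset.coe_subset.2 (Finset.subset_biUnion_of_mem _ hx)
  have hS : Module.Baer R (Finsupp.supported R R S) :=
    (Module.Baer.of_injective inferInstance).of_equiv
      ((Finsupp.supportedEquivFinsupp S).trans (Finsupp.linearEquivFunOnFinite R R S)).symm
  obtain ⟨h, hh⟩ := hS I (g.codRestrict _ fun x => hg ⟨x, rfl⟩)
  exact ⟨(Finsupp.supported R R S).subtype ∘ₗ h, fun x hx => congrArg Subtype.val (hh x hx)⟩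

theorem Module.injective_of_projective (M : Type u) [AddCommGroup M] [Module R M]
    [Module.Projective R M] : Module.Injective R M := by
  obtain ⟨s, hs⟩ := Module.projective_def'.1 (inferInstance : Module.Projective R M)
  refine ⟨fun X Y _ _ _ _ f hf g => ?_⟩
  obtain ⟨h, hh⟩ := (Module.Baer.finsupp (R := R) M).injective.out f hf (s ∘ₗ g)
  refine ⟨Finsupp.linearCombination R id ∘ₗ h, fun x => ?_⟩
  simpa [hh x] using LinearMap.congr_fun hs (g x)

theorem ModuleCat.injective_of_projective (M : ModuleCat.{u} R) [Projective M] : Injective M :=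
  have := M.projective_of_categoryTheory_projective
  have := Module.injective_of_projective (R := R) M
  Module.injective_object_of_injective_module R M

end QuasiFrobenius

namespace Quiver.Path

variable {V : Type*} [Quiver V]

def arrows {a : V} : ∀ {b : V}, Path a b → List (Σ x y : V, x ⟶ y)
  | _, nil => []
  | _, cons p e => ⟨_, _, e⟩ :: p.arrows

theorem arrows_injective {a : V} : ∀ {b : V}, Function.Injective (arrows : Path a b → _)
  | _, nil, nil, _ => rfl
  | _, cons p e, cons q f, h => by
    simp only [arrows, List.cons.injEq, Sigma.mk.injEq] at h
    obtain ⟨⟨rfl, h⟩, hpq⟩ := h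
    obtain rfl := eq_of_heq (Sigma.mk.inj_iff.1 (eq_of_heq h)).2
    rw [arrows_injective hpq]

end Quiver.Path

instance {V : Type*} [Quiver V] [Small.{u} V] [∀ a b : V, Small.{u} (a ⟶ b)] :
    LocallySmall.{u} (Paths V) :=
  ⟨fun _ _ => small_of_injective Quiver.Path.arrows_injective⟩

namespace CategoryTheory

section Coinduction

variable {R : Type u} [Ring R] {C : Type*} [Category C] [LocallySmall.{u} C] {ι : Type u}

variable (R) in
/-- `(coind R v E).obj k = ∏ᵢ ∏_{k ⟶ v i} E i`, the right adjoint of `F ↦ (F.obj (v i))ᵢ`;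
the hom-sets are shrunk so that it stays in `ModuleCat.{u} R`. -/
noncomputable def coind (v : ι → C) (E : ι → ModuleCat.{u} R) : C ⥤ ModuleCat.{u} R where
  obj k := ModuleCat.of R (∀ i, Shrink.{u} (k ⟶ v i) → E i)
  map p := ModuleCat.ofHom
    { toFun := fun f i s => f i (equivShrink _ (p ≫ (equivShrink _).symm s))
      map_add' := fun _ _ => rfl
      map_smul' := fun _ _ => rfl }
  map_id k := by ext f i s; simp
  map_comp p p' := by ext f i s; simp

namespace coind

variable {v : ι → C} {E : ι → ModuleCat.{u} R}

noncomputable def π {k : C} (i : ι) (q : k ⟶ v i) : (coind R v E).obj k ⟶ E i :=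
  ModuleCat.ofHom
    { toFun := fun x => x i (equivShrink _ q)
      map_add' := fun _ _ => rfl
      map_smul' := fun _ _ => rfl }

noncomputable def mk {k : C} (f : ∀ i, (k ⟶ v i) → E i) : (coind R v E).obj k :=
  fun i s => f i ((equivShrink _).symm s)

lemma π_apply {k : C} (i : ι) (q : k ⟶ v i) (x : (coind R v E).obj k) :
    π i q x = x i (equivShrink _ q) :=
  rfl

@[simp]
lemma π_mk {k : C} (f : ∀ i, (k ⟶ v i) → E i) (i : ι) (q : k ⟶ v i) : π i q (mk f) = f i q := by
  simp [π_apply, mk]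

@[simp]
lemma π_map {k k' : C} (p : k ⟶ k') (x : (coind R v E).obj k) (i : ι) (q : k' ⟶ v i) :
    π i q ((coind R v E).map p x) = π i (p ≫ q) x := by
  change x i (equivShrink _ (p ≫ (equivShrink _).symm (equivShrink _ q))) = _
  simp [π_apply]

lemma ext_π {k : C} {x y : (coind R v E).obj k} (h : ∀ i q, π i q x = π i q y) : x = y := by
  funext i s
  simpa [π_apply] using h i ((equivShrink _).symm s)

variable {N : C ⥤ ModuleCat.{u} R}

noncomputable def lift (ψ : ∀ i, N.obj (v i) ⟶ E i) : N ⟶ coind R v E where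
  app k := ModuleCat.ofHom
    { toFun := fun x i s => ψ i (N.map ((equivShrink _).symm s) x)
      map_add' := by intros; ext; simp
      map_smul' := by intros; ext; simp }
  naturality k k' p := by
    ext x
    refine ext_π fun i q => ?_
    change ψ i (N.map ((equivShrink _).symm (equivShrink _ q)) (N.map p x)) =
      ψ i (N.map ((equivShrink _).symm
        (equivShrink _ (p ≫ (equivShrink _).symm (equivShrink _ q)))) x)
    simp

@[simp]
lemma π_lift_app (ψ : ∀ i, N.obj (v i) ⟶ E i) {k : C} (x : N.obj k) (i : ι) (q : k ⟶ v i) :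
    π i q ((lift ψ).app k x) = ψ i (N.map q x) := by
  change ψ i (N.map ((equivShrink _).symm (equivShrink _ q)) x) = _
  simp

lemma hom_ext {f g : N ⟶ coind R v E}
    (h : ∀ i, f.app (v i) ≫ π i (𝟙 _) = g.app (v i) ≫ π i (𝟙 _)) : f = g := by
  ext k x
  refine ext_π fun i q => ?_
  have hf := ConcreteCategory.congr_hom (f.naturality q) x
  have hg := ConcreteCategory.congr_hom (g.naturality q) x
  have hfg := ConcreteCategory.congr_hom (h i) (N.map q x)
  simp only [ConcreteCategory.comp_apply] at hf hg hfg
  rw [← Category.comp_id q, ← π_map, ← π_map, ← hf, ← hg, hfg]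

variable {E' : ι → ModuleCat.{u} R}

noncomputable def map (e : ∀ i, E i ⟶ E' i) : coind R v E ⟶ coind R v E' :=
  lift fun i => π i (𝟙 _) ≫ e i

@[simp]
lemma π_map_app (e : ∀ i, E i ⟶ E' i) {k : C} (x : (coind R v E).obj k) (i : ι) (q : k ⟶ v i) :
    π i q ((map e).app k x) = e i (π i q x) := by
  simp [map]

instance epi_map (e : ∀ i, E i ⟶ E' i) [∀ i, Epi (e i)] : Epi (map (v := v) e) := by
  have he i : Function.Surjective (e i) := (ModuleCat.epi_iff_surjective _).1 inferInstance
  have (k : C) : Epi ((map (v := v) e).app k) := (ModuleCat.epi_iff_surjective _).2 fun y =>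
    ⟨mk fun i q => Function.surjInv (he i) (π i q y),
      ext_π fun i q => by simp [Function.surjInv_eq]⟩
  exact NatTrans.epi_of_epi_app _

instance injective [∀ i, Injective (E i)] : Injective (coind R v E) where
  factors g m _ := by
    refine ⟨lift fun i => Injective.factorThru (g.app (v i) ≫ π i (𝟙 _)) (m.app (v i)),
      hom_ext fun i => ?_⟩
    ext x
    have h := ConcreteCategory.congr_hom
      (Injective.comp_factorThru (g.app (v i) ≫ π i (𝟙 _)) (m.app (v i))) x
    simp only [ConcreteCategory.comp_apply] at h
    simpa using h

end coind

theorem Projective.obj_of_projective_functor (N : C ⥤ ModuleCat.{u} R) [Projective N] (k : C) :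
    Projective (N.obj k) where
  factors φ e _ := by
    obtain ⟨L, hL⟩ := Projective.factors
      (coind.lift (v := fun _ : PUnit.{u + 1} => k) fun _ => φ) (coind.map fun _ => e)
    refine ⟨L.app k ≫ coind.π PUnit.unit (𝟙 k), ?_⟩
    ext x
    simpa using congrArg (coind.π PUnit.unit (𝟙 k))
      (ConcreteCategory.congr_hom (NatTrans.congr_app hL k) x)

end Coinduction

end CategoryTheory

namespace CategoryTheory.ShortComplex.ShortExact

variable {C : Type*} [Category C] [Abelian C] {X : ShortComplex C} (hX : X.ShortExact)
  {J₀ J₁ : C} [Injective J₀] [Injective J₁] {ε : X.X₁ ⟶ J₀} {d : J₀ ⟶ J₁} {w : ε ≫ d = 0}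
  (hJ : (ShortComplex.mk ε d w).ShortExact) {P : C} [Projective P] (μ : X.X₃ ⟶ P) [Mono μ]
include hX hJ μ

/-- `Ext¹(X₃, X₁) = 0`: a map `X₃ ⟶ J₁` extends along `μ` to `P` and then lifts along `d`. -/
theorem exists_retraction_f_of_mono_projective : ∃ r : X.X₂ ⟶ X.X₁, X.f ≫ r = 𝟙 _ := by
  have := hX.mono_f
  have := hX.epi_g
  have := hJ.mono_f
  have := hJ.epi_g
  let u : X.X₂ ⟶ J₀ := Injective.factorThru ε X.f
  have hu : X.f ≫ u = ε := Injective.comp_factorThru _ _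
  let g : X.X₃ ⟶ J₁ := hX.exact.desc (u ≫ d) (by rw [← Category.assoc, hu, w])
  let H : P ⟶ J₀ := Projective.factorThru (Injective.factorThru g μ) d
  have hH : μ ≫ H ≫ d = g := by simp [H]
  let r := hJ.exact.lift (u - X.g ≫ μ ≫ H) (by simp [hH, g])
  have hr : r ≫ ε = u - X.g ≫ μ ≫ H := hJ.exact.lift_f _ _
  refine ⟨r, ?_⟩
  rw [← cancel_mono ε, Category.assoc, hr]
  simp [hu]

theorem projective_X₃_of_mono_projective [Projective X.X₂] : Projective X.X₃ := by
  obtain ⟨r, hr⟩ := hX.exists_retraction_f_of_mono_projective hJ μ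
  let s := ShortComplex.Splitting.ofExactOfRetraction X hX.exact r hr hX.epi_g
  exact (Retract.mk s.s X.g s.s_g).projective

end CategoryTheory.ShortComplex.ShortExact

theorem CategoryTheory.ShortComplex.exact_of_forall_exact_map_evaluation {C D : Type*}
    [Category C] [Category D] [Abelian D] (S : ShortComplex (C ⥤ D))
    (h : ∀ k, (S.map ((evaluation C D).obj k)).Exact) : S.Exact := by
  rw [ShortComplex.exact_iff_isZero_homology]
  refine Functor.isZero _ fun k => ?_
  exact ((ShortComplex.exact_iff_isZero_homology _).1 (h k)).of_iso
    (S.mapHomologyIso ((evaluation C D).obj k)).symm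

instance IsQuasiFrobenius.isNoetherianRing {R : Type} [Ring R] [IsQuasiFrobenius R] :
    IsNoetherianRing R :=
  IsQuasiFrobenius.noetherian_left

instance IsQuasiFrobenius.injective_self {R : Type} [Ring R] [IsQuasiFrobenius R] :
    Module.Injective R R :=
  IsQuasiFrobenius.selfInjective_left

namespace QuivRep

variable {R : Type} [Ring R] {V : Type} [Quiver.{1} V] [∀ a b : V, Small.{0} (a ⟶ b)]

/-- The arrows of `V`; they live in `Type 1`, so each hom-set is shrunk to make this a `Type`. -/
abbrev Arrow (V : Type) [Quiver.{1} V] [∀ a b : V, Small.{0} (a ⟶ b)] : Type :=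
  Σ i j : V, Shrink.{0} (i ⟶ j)

noncomputable abbrev Arrow.hom (a : Arrow V) : a.1 ⟶ a.2.1 := (equivShrink _).symm a.2.2

@[simp]
lemma Arrow.hom_mk {i j : V} (e : i ⟶ j) : Arrow.hom (⟨i, j, equivShrink _ e⟩ : Arrow V) = e :=
  Equiv.symm_apply_apply _ _

variable (A : QuivRep R V)

noncomputable abbrev coind₀ : QuivRep R V := coind R (Paths.of V).obj A.vtx

noncomputable abbrev coind₁ : QuivRep R V :=
  coind R (fun a : Arrow V => (Paths.of V).obj a.1) (fun a => A.vtx a.2.1)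

noncomputable def toCoind₀ : A ⟶ coind₀ A := coind.lift fun j => 𝟙 (A.vtx j)

noncomputable def coindDiff : coind₀ A ⟶ coind₁ A :=
  coind.lift fun a => coind.π a.1 (𝟙 _) ≫ A.arrowMap (Arrow.hom a) -
    coind.π a.2.1 ((Paths.of V).map (Arrow.hom a))

@[simp]
lemma π_toCoind₀_app {k : Paths V} (x : A.obj k) (j : V) (q : k ⟶ (Paths.of V).obj j) :
    coind.π j q ((toCoind₀ A).app k x) = A.map q x := by
  simp [toCoind₀]

@[simp]
lemma π_coindDiff_app {k : Paths V} (y : (coind₀ A).obj k) (a : Arrow V)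
    (q : k ⟶ (Paths.of V).obj a.1) :
    coind.π a q ((coindDiff A).app k y) =
      A.arrowMap (Arrow.hom a) (coind.π a.1 q y) -
        coind.π a.2.1 (q ≫ (Paths.of V).map (Arrow.hom a)) y := by
  simp only [coindDiff, coind.π_lift_app, ModuleCat.hom_sub, LinearMap.sub_apply,
    ModuleCat.hom_comp, LinearMap.comp_apply]
  rw [coind.π_map, coind.π_map, Category.comp_id]

lemma toCoind₀_comp_coindDiff : toCoind₀ A ≫ coindDiff A = 0 := by
  ext k x
  refine coind.ext_π fun a q => ?_
  simp only [NatTrans.comp_app, ConcreteCategory.comp_apply, π_coindDiff_app, π_toCoind₀_app]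
  rw [Functor.map_comp, ConcreteCategory.comp_apply]
  exact sub_self _

lemma π_eq_map_of_coindDiff_app_eq_zero {k : V} {y : (coind₀ A).obj ((Paths.of V).obj k)}
    (hy : (coindDiff A).app ((Paths.of V).obj k) y = 0) {j : V} (q : Quiver.Path k j) :
    coind.π j q y = A.map q (coind.π k (𝟙 _) y) := by
  induction q with
  | nil => exact (ConcreteCategory.congr_hom (A.map_id _) _).symm
  | cons p e ih =>
    have h := π_coindDiff_app A y (⟨_, _, equivShrink _ e⟩ : Arrow V) p
    rw [hy, map_zero, Arrow.hom_mk, eq_comm, sub_eq_zero, ih] at h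
    refine h.symm.trans ?_
    exact (ConcreteCategory.congr_hom (A.map_comp p ((Paths.of V).map e)) _).symm

noncomputable def coindDiffPreimage {k : V} (z : (coind₁ A).obj ((Paths.of V).obj k)) :
    ∀ {j : V}, Quiver.Path k j → A.vtx j
  | _, .nil => 0
  | _, .cons p e =>
    A.arrowMap e (coindDiffPreimage z p) - coind.π (⟨_, _, equivShrink _ e⟩ : Arrow V) p z

lemma coindDiff_app_mk_coindDiffPreimage {k : V} (z : (coind₁ A).obj ((Paths.of V).obj k)) :
    (coindDiff A).app ((Paths.of V).obj k) (coind.mk fun _ q => coindDiffPreimage A z q) = z := by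
  refine coind.ext_π fun a q => ?_
  obtain ⟨i, j, s⟩ := a
  obtain ⟨e, rfl⟩ := (equivShrink _).surjective s
  refine (π_coindDiff_app A _ (⟨i, j, equivShrink _ e⟩ : Arrow V) q).trans ?_
  simp only [Arrow.hom_mk, coind.π_mk]
  exact sub_sub_cancel _ _

lemma toCoind₀_app_injective (k : V) :
    Function.Injective ((toCoind₀ A).app ((Paths.of V).obj k)) := fun x x' h => by
    have h' := congrArg (coind.π k (𝟙 _)) h
    rwa [π_toCoind₀_app, π_toCoind₀_app, A.map_id, ConcreteCategory.id_apply,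
      ConcreteCategory.id_apply] at h'

lemma exists_toCoind₀_app_eq {k : V} {y : (coind₀ A).obj ((Paths.of V).obj k)}
    (hy : (coindDiff A).app ((Paths.of V).obj k) y = 0) :
    ∃ x, (toCoind₀ A).app ((Paths.of V).obj k) x = y :=
  ⟨coind.π k (𝟙 _) y, coind.ext_π fun j q => by
    refine (π_toCoind₀_app A _ j q).trans ?_
    exact (π_eq_map_of_coindDiff_app_eq_zero A hy q).symm⟩

theorem shortExact_coresolution :
    (ShortComplex.mk (toCoind₀ A) (coindDiff A) (toCoind₀_comp_coindDiff A)).ShortExact := by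
  have (k : Paths V) : Mono ((toCoind₀ A).app k) :=
    (ModuleCat.mono_iff_injective _).2 (toCoind₀_app_injective A k)
  have (k : Paths V) : Epi ((coindDiff A).app k) :=
    (ModuleCat.epi_iff_surjective _).2 fun z => ⟨_, coindDiff_app_mk_coindDiffPreimage A z⟩
  have := NatTrans.mono_of_mono_app (toCoind₀ A)
  have := NatTrans.epi_of_epi_app (coindDiff A)
  exact { exact := ShortComplex.exact_of_forall_exact_map_evaluation _ fun k =>
    (ShortComplex.moduleCat_exact_iff _).2 fun _ hy => exists_toCoind₀_app_eq A (k := k) hy }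

theorem projective_of_epi_of_mono [IsQuasiFrobenius R] {T B P : QuivRep R V} (q : T ⟶ B) [Epi q]
    [Projective T] [Projective (kernel q)] (μ : B ⟶ P) [Mono μ] [Projective P] :
    Projective B := by
  have (j : V) : Injective ((kernel q).vtx j) :=
    have := Projective.obj_of_projective_functor (kernel q) ((Paths.of V).obj j)
    ModuleCat.injective_of_projective _
  exact ShortComplex.ShortExact.projective_X₃_of_mono_projective
    (X := ShortComplex.mk (kernel.ι q) q (kernel.condition q))
    { exact := ShortComplex.exact_kernel q } (shortExact_coresolution (kernel q)) μ

theorem projDimLE_one_of_projDimLE [IsQuasiFrobenius R] {n : ℕ} {K : QuivRep R V}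
    (hK : ProjDimLE R V n K) : ProjDimLE R V 1 K := by
  induction n generalizing K with
  | zero =>
    have : Projective K := hK
    exact ⟨K, hK, 𝟙 K, inferInstance, (isZero_kernel_of_mono (𝟙 K)).projective⟩
  | succ n ih =>
    obtain ⟨P, hP, f, hf, hker⟩ := hK
    obtain ⟨T, hT, q, hq, hkq⟩ := ih hker
    have : Projective (kernel q) := hkq
    exact ⟨P, hP, f, hf, projective_of_epi_of_mono q (kernel.ι f)⟩

end QuivRep

/-- Over a quasi-Frobenius ring and a finite acyclic quiver, a representation of finite
projective dimension has projective dimension at most one: it admits a short exact sequence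
`0 → S → T → K → 0` with `S`, `T` projective objects. -/
theorem projdim_le_one_of_finite_projdim
    (R : Type) [Ring R] [IsQuasiFrobenius R]
    {V : Type} [Quiver.{1} V] (hV : IsFiniteAcyclic V)
    (K : QuivRep R V) (hK : ∃ n : ℕ, ProjDimLE R V n K) :
    ∃ (S T : QuivRep R V), Projective S ∧ Projective T ∧
      ∃ (a : S ⟶ T) (b : T ⟶ K) (w : a ≫ b = 0),
        (ShortComplex.mk a b w).ShortExact := by
  have (i j : V) : Small.{0} (i ⟶ j) :=
    let ⟨_⟩ := hV.2.1 i j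
    Countable.toSmall _
  obtain ⟨n, hn⟩ := hK
  obtain ⟨T, hT, b, hb, hS⟩ := QuivRep.projDimLE_one_of_projDimLE hn
  exact ⟨kernel b, T, hS, hT, kernel.ι b, b, kernel.condition b,
    { exact := ShortComplex.exact_kernel b }⟩
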